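/- Let a, b, τ be real numbers with a ≠ 0 and τ > 0. Then |∫₀^τ exp(i s (a² + 2ab)) ds − (exp(i τ a²) − 1)/(i a²) − (2 sin(b τ)/(a³ τ))·(exp(i τ a²)(i + τ a²) − i)| ≤ (2/3) τ³ a² b² + (1/2) τ³ |a| b². -/

import Mathlib

/-!
Factor `exp(is(a² + 2ab)) = exp(isa²) · exp(2isab)`. Replacing the second factor by `1 + 2isab`
gives an integral that can be computed exactly, and its value is the scheme with the unfiltered
coefficient `2b/a³` in place of `2 sin(bτ)/(a³τ)`. Everything else follows from the Taylor bound
`‖exp(ix) − 1 − ix‖ ≤ x²/2`. Integrated, it bounds the linearization error by `(2/3)τ³a²b²`. It also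
gives `|b − sin(bτ)/τ| ≤ b²τ/2` and `‖exp(iθ)(i + θ) − i‖ ≤ θ²/2` with `θ = τa²`, and the product
of these two bounds with `2/|a|³` bounds the filtering error.
-/

open Complex intervalIntegral

lemma norm_exp_I_mul_ofReal_sub_one_sub_le (x : ℝ) :
    ‖exp (I * x) - 1 - I * x‖ ≤ x ^ 2 / 2 := by
  have hderiv : ∀ u ∈ Set.uIcc (0 : ℝ) 1,
      HasDerivAt (fun u : ℝ => exp (I * x * u) - I * x * u) (I * x * (exp (I * x * u) - 1)) u := by
    intro u _
    have h : HasDerivAt (fun u : ℝ => I * x * u) (I * x) u := by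
      simpa using (hasDerivAt_id u).ofReal_comp.const_mul (I * x)
    exact (h.cexp.sub h).congr_deriv (by ring)
  have hrepr : exp (I * x) - 1 - I * x = ∫ u in (0 : ℝ)..1, I * x * (exp (I * x * u) - 1) := by
    rw [integral_eq_sub_of_hasDerivAt hderiv (Continuous.intervalIntegrable (by fun_prop) _ _)]
    simp only [ofReal_one, mul_one, ofReal_zero, mul_zero, exp_zero, sub_zero]
    ring
  calc ‖exp (I * x) - 1 - I * x‖
      ≤ ∫ u in (0 : ℝ)..1, x ^ 2 * u := by
        rw [hrepr]
        refine norm_integral_le_of_norm_le zero_le_one (.of_forall fun u hu => ?_)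
          (Continuous.intervalIntegrable (by fun_prop) _ _)
        have h := Real.norm_exp_I_mul_ofReal_sub_one_le (x := x * u)
        rw [ofReal_mul, ← mul_assoc] at h
        rw [norm_mul, norm_mul, norm_I, one_mul, norm_real, Real.norm_eq_abs]
        calc |x| * ‖exp (I * x * u) - 1‖ ≤ |x| * ‖x * u‖ := by gcongr
          _ = x ^ 2 * u := by
            rw [Real.norm_eq_abs, abs_mul, abs_of_nonneg hu.1.le, ← mul_assoc, abs_mul_abs_self, sq]
    _ = x ^ 2 / 2 := by rw [intervalIntegral.integral_const_mul, integral_id]; ring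

lemma abs_sub_sin_le_sq_div_two (x : ℝ) : |x - Real.sin x| ≤ x ^ 2 / 2 := by
  have him : (exp (I * x) - 1 - I * x).im = Real.sin x - x := by
    rw [mul_comm, exp_mul_I]
    simp [← ofReal_cos, ← ofReal_sin]
  calc |x - Real.sin x| = |(exp (I * x) - 1 - I * x).im| := by rw [him, abs_sub_comm]
    _ ≤ ‖exp (I * x) - 1 - I * x‖ := abs_im_le_norm _
    _ ≤ x ^ 2 / 2 := norm_exp_I_mul_ofReal_sub_one_sub_le x

lemma norm_exp_I_mul_ofReal_mul_I_add_ofReal_sub_I_le (θ : ℝ) :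
    ‖exp (I * θ) * (I + θ) - I‖ ≤ θ ^ 2 / 2 := by
  have hfactor : exp (I * θ) * (I + θ) - I
      = -I * exp (I * θ) * (exp (I * (-θ : ℝ)) - 1 - I * (-θ : ℝ)) := by
    have hinv : exp (I * θ) * exp (I * (-θ : ℝ)) = 1 := by
      rw [← exp_add, ofReal_neg, mul_neg, add_neg_cancel, exp_zero]
    push_cast at hinv ⊢
    linear_combination I * hinv + θ * exp (I * θ) * I_sq
  rw [hfactor, norm_mul, norm_mul, norm_neg, norm_I, one_mul, norm_exp_I_mul_ofReal, one_mul]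
  simpa using norm_exp_I_mul_ofReal_sub_one_sub_le (-θ)

lemma abs_sub_sin_mul_div_le {b τ : ℝ} (hτ : 0 < τ) :
    |b - Real.sin (b * τ) / τ| ≤ b ^ 2 * τ / 2 := by
  have h : b - Real.sin (b * τ) / τ = (b * τ - Real.sin (b * τ)) / τ := by field_simp
  rw [h, abs_div, abs_of_pos hτ, div_le_iff₀ hτ]
  linarith [abs_sub_sin_le_sq_div_two (b * τ)]

lemma integral_exp_I_mul_mul_one_add (ω β : ℂ) (hω : ω ≠ 0) (τ : ℝ) :
    ∫ s in (0 : ℝ)..τ, exp (I * s * ω) * (1 + I * β * s)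
      = (exp (I * τ * ω) - 1) / (I * ω) + β / ω ^ 2 * (exp (I * τ * ω) * (I + τ * ω) - I) := by
  have hderiv : ∀ s ∈ Set.uIcc (0 : ℝ) τ,
      HasDerivAt
        (fun s : ℝ => exp (I * s * ω) / (I * ω) + β / ω ^ 2 * (exp (I * s * ω) * (I + s * ω)))
        (exp (I * s * ω) * (1 + I * β * s)) s := by
    intro s _
    have hs : HasDerivAt (fun s : ℝ => (s : ℂ)) 1 s := by simpa using (hasDerivAt_id s).ofReal_comp
    have hexp := ((hs.const_mul I).mul_const ω).cexp
    refine ((hexp.div_const (I * ω)).add ((hexp.mul ((hs.mul_const ω).const_add I)).const_mul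
      (β / ω ^ 2))).congr_deriv ?_
    field_simp
    linear_combination β * I_sq
  rw [integral_eq_sub_of_hasDerivAt hderiv (Continuous.intervalIntegrable (by fun_prop) _ _)]
  simp only [ofReal_zero, mul_zero, zero_mul, exp_zero, one_div, mul_inv_rev, inv_I, mul_neg,
    add_zero, one_mul]
  field_simp
  linear_combination ω * I_sq

lemma norm_integral_exp_sub_linearization_le (ω β : ℝ) {τ : ℝ} (hτ : 0 ≤ τ) :
    ‖(∫ s in (0 : ℝ)..τ, exp (I * s * (ω + β)))
        - ∫ s in (0 : ℝ)..τ, exp (I * s * ω) * (1 + I * β * s)‖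
      ≤ β ^ 2 * τ ^ 3 / 6 := by
  have hfactor : ∀ s : ℝ, exp (I * s * (ω + β)) - exp (I * s * ω) * (1 + I * β * s)
      = exp (I * (s * ω : ℝ)) * (exp (I * (β * s : ℝ)) - 1 - I * (β * s : ℝ)) := by
    intro s
    push_cast
    rw [mul_add, exp_add]
    ring_nf
  rw [← integral_sub (Continuous.intervalIntegrable (by fun_prop) _ _)
    (Continuous.intervalIntegrable (by fun_prop) _ _)]
  calc _ ≤ ∫ s in (0 : ℝ)..τ, β ^ 2 / 2 * s ^ 2 := by
        refine norm_integral_le_of_norm_le hτ (.of_forall fun s _ => ?_)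
          (Continuous.intervalIntegrable (by fun_prop) _ _)
        rw [hfactor, norm_mul, norm_exp_I_mul_ofReal, one_mul]
        exact (norm_exp_I_mul_ofReal_sub_one_sub_le (β * s)).trans_eq (by ring)
    _ = β ^ 2 * τ ^ 3 / 6 := by
        rw [intervalIntegral.integral_const_mul, integral_pow]
        ring

lemma local_error_eq_linearization_add_filtering {a τ : ℝ} (b : ℝ) (ha : a ≠ 0) (hτ : 0 < τ) :
    (∫ s in (0 : ℝ)..τ, exp (I * s * ((a : ℂ) ^ 2 + 2 * a * b)))
        - (exp (I * τ * (a : ℂ) ^ 2) - 1) / (I * (a : ℂ) ^ 2)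
        - 2 * (Real.sin (b * τ) : ℂ) / ((a : ℂ) ^ 3 * τ)
          * (exp (I * τ * (a : ℂ) ^ 2) * (I + τ * (a : ℂ) ^ 2) - I)
      = ((∫ s in (0 : ℝ)..τ, exp (I * s * ((a : ℂ) ^ 2 + 2 * a * b)))
          - ∫ s in (0 : ℝ)..τ, exp (I * s * (a : ℂ) ^ 2) * (1 + I * (2 * a * b) * s))
        + ((2 * (b - Real.sin (b * τ) / τ) / a ^ 3 : ℝ) : ℂ)
          * (exp (I * τ * (a : ℂ) ^ 2) * (I + τ * (a : ℂ) ^ 2) - I) := by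
  have ha' : (a : ℂ) ≠ 0 := ofReal_ne_zero.2 ha
  have hτ' : (τ : ℂ) ≠ 0 := ofReal_ne_zero.2 hτ.ne'
  rw [integral_exp_I_mul_mul_one_add _ _ (pow_ne_zero 2 ha')]
  generalize ∫ s in (0 : ℝ)..τ, exp (I * s * ((a : ℂ) ^ 2 + 2 * a * b)) = J
  push_cast
  field_simp
  ring

lemma norm_filtering_error_le {a τ : ℝ} (b : ℝ) (ha : a ≠ 0) (hτ : 0 < τ) :
    ‖((2 * (b - Real.sin (b * τ) / τ) / a ^ 3 : ℝ) : ℂ)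
        * (exp (I * τ * (a : ℂ) ^ 2) * (I + τ * (a : ℂ) ^ 2) - I)‖
      ≤ 1 / 2 * τ ^ 3 * |a| * b ^ 2 := by
  have hK := norm_exp_I_mul_ofReal_mul_I_add_ofReal_sub_I_le (τ * a ^ 2)
  push_cast [← mul_assoc] at hK
  rw [norm_mul, norm_real, Real.norm_eq_abs, abs_div, abs_mul, abs_pow, abs_two]
  calc _ ≤ 2 * (b ^ 2 * τ / 2) / |a| ^ 3 * ((τ * a ^ 2) ^ 2 / 2) := by
        gcongr
        exact abs_sub_sin_mul_div_le hτ
    _ = 1 / 2 * τ ^ 3 * |a| * b ^ 2 := by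
        have : 0 < |a| := abs_pos.2 ha
        rw [← sq_abs a]
        field_simp

/-- Total frequency-level local error of the filtered low-regularity integrator's
approximation of the potential term of the disordered NLS:
`|∫₀^τ exp(is(a² + 2ab)) ds − (exp(iτa²) − 1)/(ia²)
   − (2 sin(bτ)/(a³τ))(exp(iτa²)(i + τa²) − i)| ≤ (2/3)τ³a²b² + (1/2)τ³|a|b²`. -/
theorem stmt_14 (a b τ : ℝ) (ha : a ≠ 0) (hτ : 0 < τ) :
    Norm.norm
      ((∫ s in (0 : ℝ)..τ,
          Complex.exp (Complex.I * (s : ℂ) * ((a : ℂ) ^ 2 + 2 * (a : ℂ) * (b : ℂ)))) -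
        (Complex.exp (Complex.I * (τ : ℂ) * (a : ℂ) ^ 2) - 1) / (Complex.I * (a : ℂ) ^ 2) -
        (2 * (Real.sin (b * τ) : ℂ) / ((a : ℂ) ^ 3 * (τ : ℂ))) *
          (Complex.exp (Complex.I * (τ : ℂ) * (a : ℂ) ^ 2) *
            (Complex.I + (τ : ℂ) * (a : ℂ) ^ 2) - Complex.I)) ≤
      (2 / 3) * τ ^ 3 * a ^ 2 * b ^ 2 + (1 / 2) * τ ^ 3 * |a| * b ^ 2 := by
  have hlinearization := norm_integral_exp_sub_linearization_le (a ^ 2) (2 * a * b) hτ.le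
  push_cast at hlinearization
  rw [local_error_eq_linearization_add_filtering b ha hτ]
  calc _ ≤ (2 * a * b) ^ 2 * τ ^ 3 / 6 + 1 / 2 * τ ^ 3 * |a| * b ^ 2 :=
        norm_add_le_of_le hlinearization (norm_filtering_error_le b ha hτ)
    _ = _ := by ring
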